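/- Let T be a stress-energy tensor on (N+1)-dimensional Minkowski space satisfying the dominant energy condition, with T ≠ 0. If v and w are future-directed causal vectors with T(v,w) = 0, then at least one of v, w is future-directed lightlike. -/

import Mathlib

open Matrix

/-- The Minkowski metric `diag(-1,1,…,1)` on `ℝ^{N+1}`. -/
noncomputable def eta (N : ℕ) : Matrix (Fin (N+1)) (Fin (N+1)) ℝ :=
  Matrix.diagonal (fun i => if i = 0 then (-1 : ℝ) else 1)

/-- The Minkowski bilinear form `η(x,y) = -x₀y₀ + ∑ᵢ xᵢyᵢ`. -/
noncomputable def mdot {N : ℕ} (x y : Fin (N+1) → ℝ) : ℝ :=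
  x ⬝ᵥ (eta N).mulVec y

/-- Future-directed timelike: `η(v,v) < 0` and `v₀ > 0`. -/
def FDTimelike {N : ℕ} (v : Fin (N+1) → ℝ) : Prop :=
  mdot v v < 0 ∧ 0 < v 0

/-- Future-directed lightlike: `v ≠ 0`, `η(v,v) = 0` and `v₀ > 0`. -/
def FDLightlike {N : ℕ} (v : Fin (N+1) → ℝ) : Prop :=
  v ≠ 0 ∧ mdot v v = 0 ∧ 0 < v 0

/-- Future-directed causal: future-directed timelike or lightlike. -/
def FDCausal {N : ℕ} (v : Fin (N+1) → ℝ) : Prop :=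
  FDTimelike v ∨ FDLightlike v

/-- The bilinear form associated to a matrix: `T(v,w) = vᵀ T w`. -/
noncomputable def Tbil {N : ℕ} (T : Matrix (Fin (N+1)) (Fin (N+1)) ℝ)
    (v w : Fin (N+1) → ℝ) : ℝ :=
  v ⬝ᵥ T.mulVec w

/-- The endomorphism associated to a stress-energy tensor: `u(v) = -ηTv`. -/
noncomputable def endo {N : ℕ} (T : Matrix (Fin (N+1)) (Fin (N+1)) ℝ)
    (v : Fin (N+1) → ℝ) : Fin (N+1) → ℝ :=
  -((eta N).mulVec (T.mulVec v))

/-- The dominant energy condition: every future-directed causal vector is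
sent by the associated endomorphism to a future-directed causal vector or zero. -/
def DEC {N : ℕ} (T : Matrix (Fin (N+1)) (Fin (N+1)) ℝ) : Prop :=
  ∀ v : Fin (N+1) → ℝ, FDCausal v → FDCausal (endo T v) ∨ endo T v = 0


/-! If `v` and `w` were both timelike, then `η(v, u(w)) = -T(v,w) = 0`. A future timelike vector
has strictly negative product with every future causal vector, so the DEC forces `u(w) = 0`,
i.e. `Tw = 0`. By symmetry `T(w,x) = 0` for every future timelike `x`, and the same argument with
`w` in place of `v` gives `Tx = 0`. The future timelike vectors form a nonempty open set, so
`T = 0`. -/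
theorem Matrix.eq_zero_of_isOpen_of_mulVec_eq_zero {m n 𝕜 : Type*} [Fintype n]
    [NontriviallyNormedField 𝕜] {A : Matrix m n 𝕜} {s : Set (n → 𝕜)} (hs : IsOpen s)
    (hne : s.Nonempty) (hA : ∀ x ∈ s, A *ᵥ x = 0) : A = 0 := by
  have hker : LinearMap.ker A.mulVecLin = ⊤ :=
    Submodule.eq_top_of_nonempty_interior' _
      (hs.interior_eq.symm ▸ hne |>.mono (interior_mono hA))
  refine ext_iff_mulVec.2 fun v => ?_
  have hv : v ∈ LinearMap.ker A.mulVecLin := hker ▸ Submodule.mem_top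
  simpa using hv

section Minkowski

variable {N : ℕ}

theorem mdot_eq (x y : Fin (N+1) → ℝ) :
    mdot x y = -(x 0 * y 0) + ∑ i : Fin N, x i.succ * y i.succ := by
  simp [mdot, eta, mulVec_diagonal, dotProduct, Fin.sum_univ_succ, Fin.succ_ne_zero]

theorem continuous_mdot_self : Continuous fun x : Fin (N+1) → ℝ => mdot x x :=
  continuous_id.dotProduct (continuous_const.matrix_mulVec continuous_id)

theorem isOpen_setOf_fdTimelike : IsOpen {x : Fin (N+1) → ℝ | FDTimelike x} :=
  (isOpen_lt continuous_mdot_self continuous_const).inter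
    (isOpen_lt continuous_const (continuous_apply 0))

theorem fdTimelike_single_zero : FDTimelike (Pi.single 0 1 : Fin (N+1) → ℝ) := by
  simp [FDTimelike, mdot_eq, Fin.succ_ne_zero]

theorem FDCausal.pos {y : Fin (N+1) → ℝ} (hy : FDCausal y) : 0 < y 0 := by
  rcases hy with hy | hy
  exacts [hy.2, hy.2.2]

theorem FDCausal.sum_sq_succ_le {y : Fin (N+1) → ℝ} (hy : FDCausal y) :
    ∑ i : Fin N, y i.succ ^ 2 ≤ y 0 ^ 2 := by
  have hyy : mdot y y ≤ 0 := by
    rcases hy with hy | hy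
    exacts [hy.1.le, hy.2.1.le]
  simp only [mdot_eq, ← sq] at hyy
  linarith

theorem FDTimelike.sum_sq_succ_lt {x : Fin (N+1) → ℝ} (hx : FDTimelike x) :
    ∑ i : Fin N, x i.succ ^ 2 < x 0 ^ 2 := by
  have hxx := hx.1
  simp only [mdot_eq, ← sq] at hxx
  linarith

/-- Reverse Cauchy–Schwarz: `|x⃗ ⬝ y⃗| ≤ |x⃗| |y⃗| < x₀ y₀` on the spatial parts. -/
theorem FDTimelike.mdot_neg {x y : Fin (N+1) → ℝ} (hx : FDTimelike x) (hy : FDCausal y) :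
    mdot x y < 0 := by
  have hx0 : 0 < x 0 := hx.2
  have hy0 : 0 < y 0 := hy.pos
  have hspatial : (∑ i : Fin N, x i.succ * y i.succ) ^ 2 < (x 0 * y 0) ^ 2 :=
    calc (∑ i : Fin N, x i.succ * y i.succ) ^ 2
        ≤ (∑ i : Fin N, x i.succ ^ 2) * ∑ i : Fin N, y i.succ ^ 2 :=
          Finset.sum_mul_sq_le_sq_mul_sq _ _ _
      _ ≤ (∑ i : Fin N, x i.succ ^ 2) * y 0 ^ 2 :=
          mul_le_mul_of_nonneg_left hy.sum_sq_succ_le (by positivity)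
      _ < x 0 ^ 2 * y 0 ^ 2 := mul_lt_mul_of_pos_right hx.sum_sq_succ_lt (by positivity)
      _ = (x 0 * y 0) ^ 2 := by ring
  rw [mdot_eq]
  linarith [(abs_lt_of_sq_lt_sq' hspatial (by positivity)).2]

theorem eta_mul_eta : eta N * eta N = 1 := by
  rw [eta, diagonal_mul_diagonal, ← diagonal_one]
  congr 1
  ext i
  split_ifs <;> norm_num

theorem eta_mulVec_eta_mulVec (x : Fin (N+1) → ℝ) : eta N *ᵥ (eta N *ᵥ x) = x := by
  rw [mulVec_mulVec, eta_mul_eta, one_mulVec]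

theorem mdot_endo (T : Matrix (Fin (N+1)) (Fin (N+1)) ℝ) (x y : Fin (N+1) → ℝ) :
    mdot x (endo T y) = -Tbil T x y := by
  rw [mdot, endo, mulVec_neg, eta_mulVec_eta_mulVec, dotProduct_neg, Tbil]

theorem Tbil_comm {T : Matrix (Fin (N+1)) (Fin (N+1)) ℝ} (hT : T.IsSymm) (x y : Fin (N+1) → ℝ) :
    Tbil T x y = Tbil T y x := by
  rw [Tbil, Tbil, dotProduct_mulVec, ← mulVec_transpose, hT.eq, dotProduct_comm]

theorem endo_eq_zero_iff {T : Matrix (Fin (N+1)) (Fin (N+1)) ℝ} {y : Fin (N+1) → ℝ} :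
    endo T y = 0 ↔ T *ᵥ y = 0 := by
  have hinj : Function.Injective (eta N *ᵥ ·) :=
    Function.LeftInverse.injective (g := (eta N *ᵥ ·)) eta_mulVec_eta_mulVec
  rw [endo, neg_eq_zero, hinj.eq_iff' (mulVec_zero _)]

theorem DEC.mulVec_eq_zero {T : Matrix (Fin (N+1)) (Fin (N+1)) ℝ} (hdec : DEC T)
    {x y : Fin (N+1) → ℝ} (hx : FDTimelike x) (hy : FDCausal y) (hxy : Tbil T x y = 0) :
    T *ᵥ y = 0 := by
  rcases hdec y hy with hcausal | hzero
  · have hneg := hx.mdot_neg hcausal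
    rw [mdot_endo, hxy, neg_zero] at hneg
    exact absurd hneg (lt_irrefl 0)
  · exact endo_eq_zero_iff.1 hzero

end Minkowski

theorem dec_zero_implies_lightlike_general {N : ℕ}
    (T : Matrix (Fin (N+1)) (Fin (N+1)) ℝ) (hsymm : T.IsSymm)
    (hdec : DEC T) (hT : T ≠ 0)
    (v w : Fin (N+1) → ℝ) (hv : FDCausal v) (hw : FDCausal w)
    (hvw : Tbil T v w = 0) :
    FDLightlike v ∨ FDLightlike w := by
  by_contra! hcon
  have hv' : FDTimelike v := hv.resolve_right hcon.1
  have hw' : FDTimelike w := hw.resolve_right hcon.2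
  have hTw : T *ᵥ w = 0 := hdec.mulVec_eq_zero hv' hw hvw
  refine hT (Matrix.eq_zero_of_isOpen_of_mulVec_eq_zero isOpen_setOf_fdTimelike
    ⟨_, fdTimelike_single_zero⟩ fun x hx => hdec.mulVec_eq_zero hw' (Or.inl hx) ?_)
  rw [Tbil_comm hsymm, Tbil, hTw, dotProduct_zero]

/-- Under the dominant energy condition with `T ≠ 0`, if `T(v,w) = 0` for two
future-directed causal vectors then at least one of them is lightlike. -/
theorem dec_zero_implies_lightlike {N : ℕ} (hN : 1 ≤ N)
    (T : Matrix (Fin (N+1)) (Fin (N+1)) ℝ) (hsymm : T.IsSymm)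
    (hdec : DEC T) (hT : T ≠ 0)
    (v w : Fin (N+1) → ℝ) (hv : FDCausal v) (hw : FDCausal w)
    (hvw : Tbil T v w = 0) :
    FDLightlike v ∨ FDLightlike w :=
  dec_zero_implies_lightlike_general T hsymm hdec hT v w hv hw hvw
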